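/- On a quasi-para-Sasakian manifold, the tensor A defined by AX = ∇_X ξ commutes with φ: A(φX) = φ(AX) for all vector fields X. -/

import Mathlib

/-- An abstract context for a (2n+1)-dimensional almost paracontact metric manifold:
`C` plays the role of the ring of smooth functions, `V` the module of vector fields,
with Lie bracket `bracket`, the derivation action `act` of vector fields on functions,
a (pseudo-Riemannian, nondegenerate) metric `g`, its Levi-Civita connection `nabla`
(characterized by being torsion-free and metric), and an almost paracontact metric
structure `(phi, xi, eta)`:  `φ² = Id − η ⊗ ξ`, `η(ξ) = 1`,
`g(φX, φY) = −g(X,Y) + η(X)η(Y)`. -/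
structure QPSCtx (C V : Type*) [CommRing C] [Algebra ℝ C]
    [AddCommGroup V] [Module C V] where
  bracket : V → V → V
  act : V → C → C
  act_add : ∀ X f₁ f₂, act X (f₁ + f₂) = act X f₁ + act X f₂
  act_mul : ∀ X f₁ f₂, act X (f₁ * f₂) = f₁ * act X f₂ + f₂ * act X f₁
  g : V → V → C
  g_symm : ∀ X Y, g X Y = g Y X
  g_addl : ∀ X Y Z, g (X + Y) Z = g X Z + g Y Z
  g_smull : ∀ (f : C) X Y, g (f • X) Y = f * g X Y
  g_nondeg : ∀ X, (∀ Y, g X Y = 0) → X = 0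
  nabla : V → V → V
  nabla_addl : ∀ X Y Z, nabla (X + Y) Z = nabla X Z + nabla Y Z
  nabla_addr : ∀ X Y Z, nabla X (Y + Z) = nabla X Y + nabla X Z
  nabla_smull : ∀ (f : C) X Y, nabla (f • X) Y = f • nabla X Y
  nabla_leibniz : ∀ X (f : C) Y, nabla X (f • Y) = act X f • Y + f • nabla X Y
  torsion_free : ∀ X Y, nabla X Y - nabla Y X = bracket X Y
  metric_compat : ∀ X Y Z, act X (g Y Z) = g (nabla X Y) Z + g Y (nabla X Z)
  phi : V → V
  phi_add : ∀ X Y, phi (X + Y) = phi X + phi Y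
  phi_smul : ∀ (f : C) X, phi (f • X) = f • phi X
  xi : V
  eta : V → C
  eta_add : ∀ X Y, eta (X + Y) = eta X + eta Y
  eta_smul : ∀ (f : C) X, eta (f • X) = f * eta X
  phi_sq : ∀ X, phi (phi X) = X - eta X • xi
  eta_xi : eta xi = 1
  compat : ∀ X Y, g (phi X) (phi Y) = - g X Y + eta X * eta Y

namespace QPSCtx
variable {C V : Type*} [CommRing C] [Algebra ℝ C] [AddCommGroup V] [Module C V]
variable (P : QPSCtx C V)

/-- The `(1,1)`-tensor `A X = ∇_X ξ`. -/
def A (X : V) : V := P.nabla X P.xi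

/-- The fundamental 2-form `Φ(X,Y) = g(X, φY)`. -/
def Phi (X Y : V) : C := P.g X (P.phi Y)

/-- `2 dη(X,Y) = X(η Y) − Y(η X) − η [X,Y]`. -/
def twoDeta (X Y : V) : C :=
  P.act X (P.eta Y) - P.act Y (P.eta X) - P.eta (P.bracket X Y)

/-- The Nijenhuis torsion `[φ,φ](X,Y) = φ²[X,Y] + [φX,φY] − φ[φX,Y] − φ[X,φY]`. -/
def nij (X Y : V) : V :=
  P.phi (P.phi (P.bracket X Y)) + P.bracket (P.phi X) (P.phi Y)
    - P.phi (P.bracket (P.phi X) Y) - P.phi (P.bracket X (P.phi Y))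

/-- Normality: `N⁽¹⁾(X,Y) = [φ,φ](X,Y) − 2dη(X,Y) ξ = 0`. -/
def Normal : Prop := ∀ X Y, P.nij X Y - P.twoDeta X Y • P.xi = 0

/-- Closedness of the fundamental 2-form: `3 dΦ(X,Y,Z) = 0`. -/
def PhiClosed : Prop := ∀ X Y Z,
  P.act X (P.Phi Y Z) - P.act Y (P.Phi X Z) + P.act Z (P.Phi X Y)
    - P.Phi (P.bracket X Y) Z + P.Phi (P.bracket X Z) Y - P.Phi (P.bracket Y Z) X = 0

/-- Quasi-para-Sasakian: normal almost paracontact metric with closed fundamental form. -/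
def QPS : Prop := P.Normal ∧ P.PhiClosed

/-- Para-Sasakian: normal with `Φ = dη`. -/
def ParaSasakian : Prop := P.Normal ∧ ∀ X Y, 2 * P.Phi X Y = P.twoDeta X Y

/-- The curvature tensor `R(X,Y)Z = ∇_X ∇_Y Z − ∇_Y ∇_X Z − ∇_{[X,Y]} Z`. -/
def R (X Y Z : V) : V :=
  P.nabla X (P.nabla Y Z) - P.nabla Y (P.nabla X Z) - P.nabla (P.bracket X Y) Z

/-- The deformed 1-form `η̃ = α η`. -/
def etaT (α : ℝ) (X : V) : C := algebraMap ℝ C α * P.eta X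

/-- The deformed Reeb field `ξ̃ = ξ / α`. -/
noncomputable def xiT (α : ℝ) : V := (algebraMap ℝ C α⁻¹) • P.xi

/-- The deformed metric `g̃ = β g + (α² − β) η ⊗ η`. -/
def gT (α β : ℝ) (X Y : V) : C :=
  algebraMap ℝ C β * P.g X Y + algebraMap ℝ C (α ^ 2 - β) * (P.eta X * P.eta Y)

/-- The deformed fundamental form `Φ̃(X,Y) = g̃(X, φ Y)`. -/
def PhiT (α β : ℝ) (X Y : V) : C := P.gT α β X (P.phi Y)

end QPSCtx

/-!
From `φ² = I - η ⊗ ξ` and the compatibility of `g` one gets `φ ξ = κ ξ`, `η ∘ φ = κ η` with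
`κ² = 0`, `g(ξ, ·) = η` and `g(φX, Y) = -g(X, φY) + 2κ η(X) η(Y)`. Normality at `(X, ξ)` and
`dΦ(ξ, Y, Z) = 0` first force `κ` to be constant and `∇_ξ ξ = 0`; then `dΦ(ξ, Y, Z) = 0` says that
`g(∇_Y ξ, φZ) + g(∇_{φZ} ξ, Y)` is antisymmetric in `Y, Z`, and normality gives
`dη(φX, Y) + dη(X, φY) = 0`. Since `2dη(X, Y) = g(∇_X ξ, Y) - g(∇_Y ξ, X)`, adding these identities
yields `g(∇_{φX} ξ, Y) = -g(∇_X ξ, φY) = g(φ ∇_X ξ, Y)`, and `g` is nondegenerate.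
-/

theorem eq_zero_of_add_self_eq_zero {R : Type*} [Ring R] [Algebra ℝ R] {t : R}
    (ht : t + t = 0) : t = 0 := by
  have half : algebraMap ℝ R 2⁻¹ * 2 = 1 := by
    rw [← map_ofNat (algebraMap ℝ R) 2, ← map_mul]; norm_num
  calc t = algebraMap ℝ R 2⁻¹ * 2 * t := by rw [half, one_mul]
    _ = algebraMap ℝ R 2⁻¹ * (t + t) := by rw [mul_assoc, two_mul]
    _ = 0 := by rw [ht, mul_zero]

namespace QPSCtx

variable {C V : Type*} [CommRing C] [Algebra ℝ C] [AddCommGroup V] [Module C V]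
variable (P : QPSCtx C V)

def phiₗ : V →ₗ[C] V where
  toFun := P.phi
  map_add' := P.phi_add
  map_smul' := P.phi_smul

def etaₗ : V →ₗ[C] C where
  toFun := P.eta
  map_add' := P.eta_add
  map_smul' := P.eta_smul

def gₗ (Z : V) : V →ₗ[C] C where
  toFun X := P.g X Z
  map_add' X Y := P.g_addl X Y Z
  map_smul' f X := P.g_smull f X Z

def nablaₗ (Y : V) : V →ₗ[C] V where
  toFun X := P.nabla X Y
  map_add' X X' := P.nabla_addl X X' Y
  map_smul' f X := P.nabla_smull f X Y

def nablaAddHom (X : V) : V →+ V := AddMonoidHom.mk' (P.nabla X) (P.nabla_addr X)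

theorem phi_zero : P.phi 0 = 0 := map_zero P.phiₗ
theorem phi_sub (X Y : V) : P.phi (X - Y) = P.phi X - P.phi Y := map_sub P.phiₗ X Y
theorem eta_zero : P.eta 0 = 0 := map_zero P.etaₗ
theorem eta_neg (X : V) : P.eta (-X) = -P.eta X := map_neg P.etaₗ X
theorem eta_sub (X Y : V) : P.eta (X - Y) = P.eta X - P.eta Y := map_sub P.etaₗ X Y
theorem g_zero_left (Y : V) : P.g 0 Y = 0 := map_zero (P.gₗ Y)
theorem g_neg_left (X Y : V) : P.g (-X) Y = -P.g X Y := map_neg (P.gₗ Y) X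
theorem g_sub_left (X Y Z : V) : P.g (X - Y) Z = P.g X Z - P.g Y Z :=
  map_sub (P.gₗ Z) X Y

theorem g_smul_right (f : C) (X Y : V) : P.g X (f • Y) = f * P.g X Y := by
  rw [P.g_symm, P.g_smull, P.g_symm]

theorem g_sub_right (X Y Z : V) : P.g X (Y - Z) = P.g X Y - P.g X Z := by
  rw [P.g_symm, g_sub_left, P.g_symm Y, P.g_symm Z]

theorem nabla_sub_left (X Y Z : V) : P.nabla (X - Y) Z = P.nabla X Z - P.nabla Y Z :=
  map_sub (P.nablaₗ Z) X Y

theorem nabla_sub_right (X Y Z : V) : P.nabla X (Y - Z) = P.nabla X Y - P.nabla X Z :=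
  map_sub (P.nablaAddHom X) Y Z

theorem act_one (X : V) : P.act X 1 = 0 := by
  have := P.act_mul X 1 1
  rw [one_mul, one_mul] at this
  linear_combination -this

theorem bracket_eq (X Y : V) : P.bracket X Y = P.nabla X Y - P.nabla Y X :=
  (P.torsion_free X Y).symm

theorem bracket_swap (X Y : V) : P.bracket X Y = -P.bracket Y X := by
  rw [bracket_eq, bracket_eq, neg_sub]

theorem bracket_smul_right (X : V) (f : C) (Y : V) :
    P.bracket X (f • Y) = f • P.bracket X Y + P.act X f • Y := by
  rw [bracket_eq, bracket_eq, P.nabla_leibniz, P.nabla_smull]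
  module

theorem bracket_sub_right (X Y Z : V) :
    P.bracket X (Y - Z) = P.bracket X Y - P.bracket X Z := by
  rw [bracket_eq, bracket_eq, bracket_eq, nabla_sub_right, nabla_sub_left]
  abel

/-- `φ ξ = κ ξ` with `κ² = 0` (`phi_xi`, `κ_mul_self`); the axioms do not force `κ = 0`,
since `C` may have nilpotents. -/
def κ : C := P.eta (P.phi P.xi)

theorem phi_phi_xi : P.phi (P.phi P.xi) = 0 := by
  rw [P.phi_sq, P.eta_xi, one_smul, sub_self]

theorem phi_xi : P.phi P.xi = P.κ • P.xi := by
  have h := P.phi_sq (P.phi P.xi)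
  rw [phi_phi_xi, phi_zero] at h
  change 0 = _ - P.κ • _ at h
  linear_combination (norm := module) -h

theorem κ_mul_self : P.κ * P.κ = 0 := by
  have h := congrArg P.eta P.phi_phi_xi
  rwa [phi_xi, P.phi_smul, phi_xi, smul_smul, P.eta_smul, P.eta_xi, mul_one, eta_zero] at h

theorem eta_phi (X : V) : P.eta (P.phi X) = P.κ * P.eta X := by
  have h := P.phi_sq (P.phi X)
  rw [P.phi_sq X, phi_sub, P.phi_smul, phi_xi, smul_smul] at h
  have h' : (P.eta (P.phi X) - P.eta X * P.κ) • P.xi = 0 := by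
    linear_combination (norm := module) h
  have h'' := congrArg P.eta h'
  rw [P.eta_smul, P.eta_xi, eta_zero, mul_one] at h''
  linear_combination h''

theorem g_xi_left (Y : V) : P.g P.xi Y = P.eta Y := by
  have e₁ := P.compat P.xi Y
  rw [phi_xi, P.g_smull, P.eta_xi, one_mul] at e₁
  have e₂ := P.compat P.xi (P.phi Y)
  rw [phi_xi, P.g_smull, P.phi_sq Y, g_sub_right, g_smul_right, P.eta_xi, one_mul,
    eta_phi] at e₂
  linear_combination e₁ - P.κ * e₂ +
    (P.g P.xi Y - P.eta Y * P.g P.xi P.xi - P.eta Y) * P.κ_mul_self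

theorem g_xi_right (X : V) : P.g X P.xi = P.eta X := by
  rw [P.g_symm, g_xi_left]

theorem g_phi_left (X Y : V) :
    P.g (P.phi X) Y = -P.g X (P.phi Y) + 2 * P.κ * P.eta X * P.eta Y := by
  have e := P.compat X (P.phi Y)
  rw [P.phi_sq Y, g_sub_right, g_smul_right, g_xi_right, eta_phi, eta_phi] at e
  linear_combination e

theorem g_A_xi (X : V) : P.g (P.A X) P.xi = 0 := by
  have e := P.metric_compat X P.xi P.xi
  rw [g_xi_left, P.eta_xi, act_one, P.g_symm P.xi] at e
  exact eq_zero_of_add_self_eq_zero e.symm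

theorem eta_A (X : V) : P.eta (P.A X) = 0 := by
  rw [← g_xi_right, g_A_xi]

theorem act_eta (X Y : V) : P.act X (P.eta Y) = P.g (P.A X) Y + P.eta (P.nabla X Y) := by
  rw [← g_xi_left, P.metric_compat, g_xi_left, A]

theorem twoDeta_eq (X Y : V) : P.twoDeta X Y = P.g (P.A X) Y - P.g (P.A Y) X := by
  rw [twoDeta, act_eta, act_eta, bracket_eq, eta_sub]
  ring

theorem act_smul_g (f : C) (X Y Z : V) : P.act (f • X) (P.g Y Z) = f * P.act X (P.g Y Z) := by
  rw [P.metric_compat, P.metric_compat, P.nabla_smull, P.nabla_smull, P.g_smull, g_smul_right]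
  ring

theorem act_sub_g (X W Y Z : V) :
    P.act (X - W) (P.g Y Z) = P.act X (P.g Y Z) - P.act W (P.g Y Z) := by
  rw [P.metric_compat, P.metric_compat, P.metric_compat, nabla_sub_left, nabla_sub_left,
    g_sub_left, g_sub_right]
  ring

theorem κ_eq_g : P.κ = P.g P.xi (P.phi P.xi) := by
  rw [g_xi_left, κ]

theorem act_phi_phi_κ (X : V) :
    P.act (P.phi (P.phi X)) P.κ = P.act X P.κ - P.eta X * P.act P.xi P.κ := by
  rw [κ_eq_g, P.phi_sq, act_sub_g, act_smul_g]

theorem act_smul_xi_κ : P.act (P.κ • P.xi) P.κ = P.κ * P.act P.xi P.κ := by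
  nth_rw 2 [κ_eq_g]
  rw [act_smul_g, ← κ_eq_g]

namespace Normal

variable {P}
variable (hN : P.Normal)
include hN

theorem eta_bracket_phi_phi (X Y : V) :
    P.eta (P.bracket (P.phi X) (P.phi Y)) =
      P.twoDeta X Y + P.κ * P.eta (P.bracket (P.phi X) Y)
        + P.κ * P.eta (P.bracket X (P.phi Y)) := by
  have n := congrArg P.eta (hN X Y)
  simp only [nij, eta_sub, P.eta_add, P.eta_smul, eta_phi, P.eta_xi, eta_zero] at n
  linear_combination n - P.eta (P.bracket X Y) * P.κ_mul_self

theorem normal_xi (X : V) :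
    P.bracket X P.xi + P.κ • P.bracket (P.phi X) P.xi - P.phi (P.bracket (P.phi X) P.xi)
        - P.κ • P.phi (P.bracket X P.xi)
      = (-P.act P.xi (P.eta X) - P.act (P.phi X) P.κ + P.κ * P.act X P.κ) • P.xi := by
  have n := hN X P.xi
  simp only [nij, twoDeta] at n
  rw [P.eta_xi, act_one, phi_xi, bracket_smul_right, bracket_smul_right, P.phi_add,
    P.phi_smul, P.phi_smul, phi_xi, P.phi_sq] at n
  linear_combination (norm := module) n

theorem eta_bracket_xi (X : V) :
    P.eta (P.bracket X P.xi)
      = -P.act P.xi (P.eta X) - P.act (P.phi X) P.κ + P.κ * P.act X P.κ := by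
  have n := congrArg P.eta (hN.normal_xi X)
  simp only [eta_sub, P.eta_add, P.eta_smul, eta_phi, P.eta_xi] at n
  linear_combination n + P.eta (P.bracket X P.xi) * P.κ_mul_self

theorem eta_bracket_phi_xi (X : V) :
    P.eta (P.bracket (P.phi X) P.xi)
      = -(P.κ * P.act P.xi (P.eta X)) - P.act X P.κ + P.κ * P.act (P.phi X) P.κ := by
  rw [hN.eta_bracket_xi, eta_phi, P.act_mul, act_phi_phi_κ]
  ring

theorem phi_bracket_xi (X : V) :
    P.phi (P.bracket X P.xi)
      = P.bracket (P.phi X) P.xi + (P.act X P.κ - 2 * P.κ * P.act (P.phi X) P.κ) • P.xi := by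
  have n : P.phi (P.bracket (P.phi X) P.xi)
      = P.bracket X P.xi + P.κ • P.bracket (P.phi X) P.xi - P.κ • P.phi (P.bracket X P.xi)
        + (P.act P.xi (P.eta X) + P.act (P.phi X) P.κ - P.κ * P.act X P.κ) • P.xi := by
    linear_combination (norm := module) -hN.normal_xi X
  have e := P.phi_sq (P.bracket (P.phi X) P.xi)
  rw [hN.eta_bracket_phi_xi, n, P.phi_add, phi_sub, P.phi_add, P.phi_smul, P.phi_smul,
    P.phi_smul, n, P.phi_sq, hN.eta_bracket_xi, phi_xi] at e
  have hκ (v : V) : (P.κ * P.κ) • v = (0 : C) • v := by rw [κ_mul_self]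
  linear_combination (norm := module) e - hκ (P.bracket (P.phi X) P.xi)
    + hκ (P.phi (P.bracket X P.xi)) + P.act X P.κ • hκ P.xi

end Normal

namespace QPS

variable {P}
variable (h : P.QPS)
include h

theorem closed_at_xi (Y Z : V) :
    P.g (P.A Y) (P.phi Z) + P.g (P.A (P.phi Z)) Y
      = P.κ * P.act Y (P.eta Z) - P.κ * P.act Z (P.eta Y) + P.κ * P.eta (P.bracket Y Z)
        + P.eta Z * P.act Y P.κ - 2 * P.eta Y * P.act Z P.κ
        - 2 * P.κ * P.act P.xi (P.eta Z) * P.eta Y := by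
  have q := h.2 P.xi Y Z
  simp only [Phi] at q
  rw [g_xi_left, g_xi_left, eta_phi, eta_phi, P.act_mul, P.act_mul, phi_xi, g_smul_right,
    g_xi_right, P.metric_compat P.xi Y, P.bracket_eq P.xi Y, g_sub_left,
    P.bracket_swap P.xi Z, g_neg_left] at q
  have sk := P.g_phi_left (P.bracket Z P.xi) Y
  rw [h.1.phi_bracket_xi, h.1.eta_bracket_xi, P.bracket_eq (P.phi Z), P.g_addl, g_sub_left,
    P.g_smull, g_xi_left] at sk
  simp only [A]
  linear_combination q + sk - P.g_symm Y (P.nabla P.xi (P.phi Z))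
    + 2 * P.act Z P.κ * P.eta Y * P.κ_mul_self

theorem g_A_xi_left_phi (Z : V) :
    P.g (P.A P.xi) (P.phi Z)
      = P.κ * P.act (P.phi Z) P.κ + P.eta Z * P.act P.xi P.κ - 2 * P.act Z P.κ := by
  have e := h.closed_at_xi P.xi Z
  rw [g_A_xi, P.eta_xi, act_one, P.bracket_swap, eta_neg, h.1.eta_bracket_xi] at e
  linear_combination e - P.act Z P.κ * P.κ_mul_self

theorem g_A_xi_left (W : V) :
    P.g (P.A P.xi) W = P.κ * P.act W P.κ - 2 * P.act (P.phi W) P.κ := by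
  have e := h.g_A_xi_left_phi (P.phi W)
  rw [act_phi_phi_κ, eta_phi, P.phi_sq, g_sub_right, g_smul_right, g_A_xi] at e
  linear_combination e

theorem act_κ_eq (Y : V) :
    P.act Y P.κ = -(P.κ * P.act (P.phi Y) P.κ) + 2 * P.κ * P.act P.xi (P.eta Y)
      + 2 * P.eta Y * P.act P.xi P.κ := by
  have e := h.closed_at_xi Y P.xi
  rw [phi_xi, g_smul_right, g_A_xi, A, P.nabla_smull, P.g_smull, ← A,
    h.g_A_xi_left, P.eta_xi, act_one, act_one, h.1.eta_bracket_xi] at e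
  linear_combination -e

theorem act_xi_κ : P.act P.xi P.κ = 0 := by
  have e := h.act_κ_eq P.xi
  rw [phi_xi, act_smul_xi_κ, P.eta_xi, act_one] at e
  linear_combination -e + P.act P.xi P.κ * P.κ_mul_self

theorem κ_mul_act_κ (Y : V) : P.κ * P.act Y P.κ = 0 := by
  linear_combination P.κ * h.act_κ_eq Y
    + (2 * P.act P.xi (P.eta Y) - P.act (P.phi Y) P.κ) * P.κ_mul_self
    + 2 * P.κ * P.eta Y * h.act_xi_κ

theorem act_phi_κ (Y : V) : P.act (P.phi Y) P.κ = 0 := by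
  have e := h.act_κ_eq (P.phi Y)
  rw [act_phi_phi_κ, eta_phi, P.act_mul P.xi P.κ] at e
  linear_combination e - h.κ_mul_act_κ Y + 5 * P.κ * P.eta Y * h.act_xi_κ
    + 2 * P.act P.xi (P.eta Y) * P.κ_mul_self

theorem A_xi : P.A P.xi = 0 :=
  P.g_nondeg _ fun W => by
    rw [h.g_A_xi_left, h.act_phi_κ]
    linear_combination h.κ_mul_act_κ W

theorem act_κ (Z : V) : P.act Z P.κ = 0 := by
  have e := h.g_A_xi_left_phi Z
  rw [h.A_xi, g_zero_left, h.act_phi_κ, h.act_xi_κ] at e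
  exact eq_zero_of_add_self_eq_zero (by linear_combination e)

theorem κ_mul_act_xi_eta (Y : V) : P.κ * P.act P.xi (P.eta Y) = 0 := by
  have e := h.act_κ_eq Y
  rw [h.act_κ, h.act_phi_κ, h.act_xi_κ] at e
  exact eq_zero_of_add_self_eq_zero (by linear_combination -e)

theorem eta_bracket_xi (X : V) : P.eta (P.bracket X P.xi) = -P.act P.xi (P.eta X) := by
  rw [h.1.eta_bracket_xi, h.act_phi_κ, h.act_κ]
  ring

theorem eta_bracket_phi_xi (X : V) : P.eta (P.bracket (P.phi X) P.xi) = 0 := by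
  rw [h.1.eta_bracket_phi_xi, h.act_phi_κ, h.act_κ]
  linear_combination -h.κ_mul_act_xi_eta X

theorem g_A_phi_add_g_A_phi (Y Z : V) :
    P.g (P.A Y) (P.phi Z) + P.g (P.A (P.phi Z)) Y
      = P.κ * P.act Y (P.eta Z) - P.κ * P.act Z (P.eta Y) + P.κ * P.eta (P.bracket Y Z) := by
  rw [h.closed_at_xi, h.act_κ, h.act_κ]
  linear_combination -2 * P.eta Y * h.κ_mul_act_xi_eta Z

theorem twoDeta_phi_add_twoDeta_phi (X Y : V) :
    P.twoDeta (P.phi X) Y + P.twoDeta X (P.phi Y) = 0 := by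
  have n := h.1.eta_bracket_phi_phi X (P.phi Y)
  rw [P.phi_sq Y, P.bracket_sub_right, P.bracket_smul_right, P.bracket_sub_right,
    P.bracket_smul_right, eta_sub, eta_sub, P.eta_add, P.eta_add, P.eta_smul, P.eta_smul,
    P.eta_smul, P.eta_smul, P.eta_xi, h.eta_bracket_phi_xi, h.eta_bracket_xi] at n
  have n' := h.1.eta_bracket_phi_phi X Y
  simp only [twoDeta] at n n' ⊢
  rw [eta_phi, P.act_mul, h.act_κ]
  linear_combination -n - P.κ * n' - P.eta Y * h.κ_mul_act_xi_eta X
    - (P.eta (P.bracket (P.phi X) Y) + P.eta (P.bracket X (P.phi Y))) * P.κ_mul_self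

end QPS

end QPSCtx

theorem stmt5 {C V : Type*} [CommRing C] [Algebra ℝ C] [AddCommGroup V] [Module C V]
    (P : QPSCtx C V) (h : P.QPS) :
    ∀ X, P.A (P.phi X) = P.phi (P.A X) := by
  intro X
  have hskew (Y : V) : P.g (P.A (P.phi X)) Y + P.g (P.A X) (P.phi Y) = 0 := by
    have hbr : P.eta (P.bracket Y X) = -P.eta (P.bracket X Y) := by
      rw [P.bracket_swap, P.eta_neg]
    refine eq_zero_of_add_self_eq_zero ?_
    linear_combination -P.twoDeta_eq (P.phi X) Y - P.twoDeta_eq X (P.phi Y)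
      + h.g_A_phi_add_g_A_phi Y X + h.g_A_phi_add_g_A_phi X Y
      + h.twoDeta_phi_add_twoDeta_phi X Y + P.κ * hbr
  refine sub_eq_zero.1 (P.g_nondeg _ fun Y => ?_)
  rw [P.g_sub_left, P.g_phi_left, P.eta_A]
  linear_combination hskew Y
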